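/- arXiv:1202.4735 — 2 statements merged into one kernel-verified Lean document; each statement's English description precedes it below -/
import Mathlib

section
/- For every M > 0 there exist K > 0 and N ∈ ℕ such that for all integers n > N, all t ∈ [0, n^{−2}], and all λ ∈ ℂ with |λ − (2πn)²| ≤ M/n, one has |(λ − (2π(n−1) + t)²)^{−1} + (λ − (2π(n+1) + t)²)^{−1}| ≤ K/n². -/
/-!
Write `x = λ - (2π(n-1)+t)²` and `y = λ - (2π(n+1)+t)²`, so that `x⁻¹ + y⁻¹ = (x + y)/(x y)`.
The two squares lie at distance of order `n` on either side of `(2πn)²`, while `λ` is within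
`M/n ≤ 1` of `(2πn)²`, so `|x|, |y| ≥ n`. On the other hand the squares are symmetric about
`(2πn)²` up to `O(1)`: `2(2πn)² - (2π(n-1)+t)² - (2π(n+1)+t)² = -(8π² + 8πtn + 2t²)`, and
`tn ≤ 1`; hence `x + y = 2(λ - (2πn)²) + O(1)` is bounded and the sum is `O(n⁻²)`.
-/

open Real

theorem norm_inv_add_inv_le {𝕜 : Type*} [NormedField 𝕜] {x y : 𝕜} {c : ℝ} (hc : 0 < c)
    (hx : c ≤ ‖x‖) (hy : c ≤ ‖y‖) : ‖x⁻¹ + y⁻¹‖ ≤ ‖x + y‖ / c ^ 2 := by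
  have hx₀ : x ≠ 0 := norm_pos_iff.mp (hc.trans_le hx)
  have hy₀ : y ≠ 0 := norm_pos_iff.mp (hc.trans_le hy)
  rw [inv_add_inv hx₀ hy₀, norm_div, norm_mul, sq]
  exact div_le_div_of_nonneg_left (norm_nonneg _) (by positivity)
    (mul_le_mul hx hy hc.le (hc.le.trans hx))

theorem abs_sub_le_norm_sub_ofReal_add (lam : ℂ) (a μ : ℝ) :
    |μ - a| ≤ ‖lam - a‖ + ‖lam - μ‖ := by
  have h := norm_sub_le_norm_sub_add_norm_sub (μ : ℂ) lam a
  rw [← Complex.ofReal_sub, Complex.norm_real, Real.norm_eq_abs, norm_sub_rev (μ : ℂ)] at h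
  linarith

theorem norm_inv_sub_add_inv_sub_le (lam : ℂ) {a b μ c : ℝ} (hc : 0 < c)
    (ha : c + ‖lam - μ‖ ≤ μ - a) (hb : c + ‖lam - μ‖ ≤ b - μ) :
    ‖(lam - a)⁻¹ + (lam - b)⁻¹‖ ≤ (2 * ‖lam - μ‖ + |2 * μ - a - b|) / c ^ 2 := by
  have hx : c ≤ ‖lam - a‖ := by
    have := abs_sub_le_norm_sub_ofReal_add lam a μ
    linarith [le_abs_self (μ - a)]
  have hy : c ≤ ‖lam - b‖ := by
    have := abs_sub_le_norm_sub_ofReal_add lam b μ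
    linarith [neg_le_abs (μ - b)]
  refine (norm_inv_add_inv_le hc hx hy).trans (div_le_div_of_nonneg_right ?_ (by positivity))
  have hsum : lam - a + (lam - b) = 2 * (lam - μ) + ((2 * μ - a - b : ℝ) : ℂ) := by
    push_cast; ring
  calc ‖lam - a + (lam - b)‖ ≤ ‖2 * (lam - μ)‖ + ‖((2 * μ - a - b : ℝ) : ℂ)‖ := by
        rw [hsum]; exact norm_add_le _ _
    _ = 2 * ‖lam - μ‖ + |2 * μ - a - b| := by
        rw [norm_mul, Complex.norm_real, Real.norm_eq_abs, Complex.norm_two]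

section Ladder

variable {n t : ℝ}

theorem two_mul_le_sq_two_pi_mul_sub_sq_pred (hn : 1 ≤ n) (ht₀ : 0 ≤ t) (ht₁ : t ≤ 1) :
    2 * n ≤ (2 * π * n) ^ 2 - (2 * π * (n - 1) + t) ^ 2 := by
  have hπ := pi_gt_three
  have hfactor : (2 * π * n) ^ 2 - (2 * π * (n - 1) + t) ^ 2 =
      (2 * π - t) * (2 * π * (2 * n - 1) + t) := by ring
  rw [hfactor]
  nlinarith [mul_le_mul (show 1 ≤ 2 * π - t by linarith)
    (show 2 * n ≤ 2 * π * (2 * n - 1) + t by nlinarith) (by linarith) (by linarith)]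

theorem two_mul_le_sq_succ_sub_sq_two_pi_mul (hn : 1 ≤ n) (ht₀ : 0 ≤ t) :
    2 * n ≤ (2 * π * (n + 1) + t) ^ 2 - (2 * π * n) ^ 2 := by
  have hπ := pi_gt_three
  have hfactor : (2 * π * (n + 1) + t) ^ 2 - (2 * π * n) ^ 2 =
      (2 * π + t) * (2 * π * (2 * n + 1) + t) := by ring
  rw [hfactor]
  nlinarith [mul_le_mul (show 1 ≤ 2 * π + t by linarith)
    (show 2 * n ≤ 2 * π * (2 * n + 1) + t by nlinarith) (by linarith) (by linarith)]

theorem abs_two_mul_sq_sub_sq_pred_sub_sq_succ_le (hn : 0 ≤ n) (ht₀ : 0 ≤ t) (ht₁ : t ≤ 1)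
    (htn : t * n ≤ 1) :
    |2 * (2 * π * n) ^ 2 - (2 * π * (n - 1) + t) ^ 2 - (2 * π * (n + 1) + t) ^ 2| ≤
      8 * π ^ 2 + 8 * π + 2 := by
  have hπ := pi_pos
  have hid : 2 * (2 * π * n) ^ 2 - (2 * π * (n - 1) + t) ^ 2 - (2 * π * (n + 1) + t) ^ 2 =
      -(8 * π ^ 2 + 8 * π * (t * n) + 2 * t ^ 2) := by ring
  have htn₀ : 0 ≤ t * n := mul_nonneg ht₀ hn
  rw [hid, abs_neg, abs_of_nonneg (by positivity)]
  nlinarith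

end Ladder

theorem stmt3_general (M : ℝ) :
    ∃ K : ℝ, 0 < K ∧ ∃ N : ℕ, ∀ n : ℕ, N < n →
      ∀ t : ℝ, t ∈ Set.Icc (0 : ℝ) (((n : ℝ) ^ 2)⁻¹) →
      ∀ lam : ℂ, ‖lam - (((2 * Real.pi * (n : ℝ)) ^ 2 : ℝ) : ℂ)‖ ≤ M / n →
        ‖(lam - (((2 * Real.pi * ((n : ℝ) - 1) + t) ^ 2 : ℝ) : ℂ))⁻¹ +
              (lam - (((2 * Real.pi * ((n : ℝ) + 1) + t) ^ 2 : ℝ) : ℂ))⁻¹‖ ≤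
          K / (n : ℝ) ^ 2 := by
  refine ⟨8 * π ^ 2 + 8 * π + 4, by positivity, ⌈M⌉₊, fun n hn t ⟨ht₀, ht⟩ lam hlam => ?_⟩
  have hn₁ : (1 : ℝ) ≤ n := by exact_mod_cast Nat.one_le_of_lt hn
  have hMn : M ≤ n := (Nat.le_ceil M).trans (by exact_mod_cast hn.le)
  have hδ : ‖lam - (((2 * π * n) ^ 2 : ℝ) : ℂ)‖ ≤ 1 :=
    hlam.trans ((div_le_one (by linarith)).mpr hMn)
  have htn : t * n ≤ 1 := by
    calc t * n ≤ ((n : ℝ) ^ 2)⁻¹ * n := by gcongr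
      _ = (n : ℝ)⁻¹ := by field_simp
      _ ≤ 1 := inv_le_one_of_one_le₀ hn₁
  have ht₁ : t ≤ 1 := by nlinarith
  have hn₀ : (0 : ℝ) < n := by linarith
  refine (norm_inv_sub_add_inv_sub_le lam (μ := (2 * π * n) ^ 2) hn₀ ?_ ?_).trans ?_
  · linarith [two_mul_le_sq_two_pi_mul_sub_sq_pred hn₁ ht₀ ht₁]
  · linarith [two_mul_le_sq_succ_sub_sq_two_pi_mul hn₁ ht₀]
  · refine div_le_div_of_nonneg_right ?_ (by positivity)
    linarith [abs_two_mul_sq_sub_sq_pred_sub_sq_succ_le hn₀.le ht₀ ht₁ htn]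

/-- The cancellation estimate behind formula (53): for `λ` near `(2πn)²` and
`t ∈ [0, n⁻²]`, the two first-order resolvent terms nearly cancel, giving `O(n⁻²)`. -/
theorem stmt3 (M : ℝ) (hM : 0 < M) :
    ∃ K : ℝ, 0 < K ∧ ∃ N : ℕ, ∀ n : ℕ, N < n →
      ∀ t : ℝ, t ∈ Set.Icc (0 : ℝ) (((n : ℝ) ^ 2)⁻¹) →
      ∀ lam : ℂ, ‖lam - (((2 * Real.pi * (n : ℝ)) ^ 2 : ℝ) : ℂ)‖ ≤ M / n →
        ‖(lam - (((2 * Real.pi * ((n : ℝ) - 1) + t) ^ 2 : ℝ) : ℂ))⁻¹ +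
              (lam - (((2 * Real.pi * ((n : ℝ) + 1) + t) ^ 2 : ℝ) : ℂ))⁻¹‖ ≤
          K / (n : ℝ) ^ 2 :=
  stmt3_general M
end

section
/- Let a, b ∈ ℂ and use the admissible-sequence definitions of a_k(λ,t) and a′_k(λ,t) for the Mathieu potential. For every M > 0 there exist K > 0 and N ∈ ℕ such that for all integers n > N, all t ∈ [0, n^{−2}], and all λ ∈ ℂ with |λ − (2πn)²| ≤ M/n: the series A(λ,t) = Σ_{k≥1} a_k(λ,t) and A′(λ,t) = Σ_{k≥1} a′_k(λ,t) converge absolutely, |A(λ,t)| ≤ K/n², and |A′(λ,t)| ≤ K/n². -/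
open Finset

namespace Mathieu

/-- `±1` value attached to a boolean index. -/
def sgn (x : Bool) : ℤ := if x then 1 else -1

/-- Partial sum `n₁ + ⋯ + n_s` of the `±1` sequence encoded by `v`. -/
def psum {k : ℕ} (v : Fin k → Bool) (s : ℕ) : ℤ :=
  ∑ i ∈ Finset.univ.filter (fun i : Fin k => (i : ℕ) < s), sgn (v i)

/-- `n`-admissible sequences: all partial sums avoid `0` and `2n`. -/
def Admissible (n k : ℕ) (v : Fin k → Bool) : Prop :=
  ∀ s : Fin k, psum v ((s : ℕ) + 1) ≠ 0 ∧ psum v ((s : ℕ) + 1) ≠ 2 * (n : ℤ)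

/-- `n`-coadmissible sequences: all partial sums avoid `0` and `-2n`. -/
def Coadmissible (n k : ℕ) (v : Fin k → Bool) : Prop :=
  ∀ s : Fin k, psum v ((s : ℕ) + 1) ≠ 0 ∧ psum v ((s : ℕ) + 1) ≠ -(2 * (n : ℤ))

instance (n k : ℕ) : DecidablePred (Admissible n k) := fun v => by
  unfold Admissible; infer_instance

instance (n k : ℕ) : DecidablePred (Coadmissible n k) := fun v => by
  unfold Coadmissible; infer_instance

/-- Fourier coefficients of the Mathieu potential: `q₋₁ = a`, `q₁ = b`, else `0`. -/
noncomputable def qc (a b : ℂ) (m : ℤ) : ℂ :=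
  if m = -1 then a else if m = 1 then b else 0

/-- Resolvent factor `(λ - (2π(n - j) + t)²)⁻¹`. -/
noncomputable def denom (n : ℕ) (lam : ℂ) (t : ℝ) (j : ℤ) : ℂ :=
  (lam - (((2 * Real.pi * ((n : ℝ) - (j : ℝ)) + t) ^ 2 : ℝ) : ℂ))⁻¹

/-- Resolvent factor `(λ - (2π(n + j) - t)²)⁻¹`. -/
noncomputable def denom' (n : ℕ) (lam : ℂ) (t : ℝ) (j : ℤ) : ℂ :=
  (lam - (((2 * Real.pi * ((n : ℝ) + (j : ℝ)) - t) ^ 2 : ℝ) : ℂ))⁻¹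

/-- The term `a_k(λ,t)` of the perturbation series (formula (13)). -/
noncomputable def ak (a b : ℂ) (n k : ℕ) (lam : ℂ) (t : ℝ) : ℂ :=
  ∑ v ∈ Finset.univ.filter (Admissible n k),
    qc a b (-(psum v k)) *
      ∏ i : Fin k, (qc a b (sgn (v i)) * denom n lam t (psum v ((i : ℕ) + 1)))

/-- The term `b_k(λ,t)` of the perturbation series (formula (14)). -/
noncomputable def bk (a b : ℂ) (n k : ℕ) (lam : ℂ) (t : ℝ) : ℂ :=
  ∑ v ∈ Finset.univ.filter (Admissible n k),
    qc a b (2 * (n : ℤ) - psum v k) *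
      ∏ i : Fin k, (qc a b (sgn (v i)) * denom n lam t (psum v ((i : ℕ) + 1)))

/-- The term `a′_k(λ,t)` of the perturbation series (formula (17)). -/
noncomputable def ak' (a b : ℂ) (n k : ℕ) (lam : ℂ) (t : ℝ) : ℂ :=
  ∑ v ∈ Finset.univ.filter (Coadmissible n k),
    qc a b (-(psum v k)) *
      ∏ i : Fin k, (qc a b (sgn (v i)) * denom' n lam t (psum v ((i : ℕ) + 1)))

/-- The term `b′_k(λ,t)` of the perturbation series (formula (18)). -/
noncomputable def bk' (a b : ℂ) (n k : ℕ) (lam : ℂ) (t : ℝ) : ℂ :=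
  ∑ v ∈ Finset.univ.filter (Coadmissible n k),
    qc a b (-(2 * (n : ℤ)) - psum v k) *
      ∏ i : Fin k, (qc a b (sgn (v i)) * denom' n lam t (psum v ((i : ℕ) + 1)))

/-- `A(λ,t) = Σ_{k≥1} a_k(λ,t)`. -/
noncomputable def Afun (a b : ℂ) (n : ℕ) (lam : ℂ) (t : ℝ) : ℂ := ∑' k : ℕ, ak a b n (k + 1) lam t

/-- `A′(λ,t) = Σ_{k≥1} a′_k(λ,t)`. -/
noncomputable def A'fun (a b : ℂ) (n : ℕ) (lam : ℂ) (t : ℝ) : ℂ := ∑' k : ℕ, ak' a b n (k + 1) lam t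

/-- `B(λ,t) = Σ_{k≥1} b_k(λ,t)`. -/
noncomputable def Bfun (a b : ℂ) (n : ℕ) (lam : ℂ) (t : ℝ) : ℂ := ∑' k : ℕ, bk a b n (k + 1) lam t

/-- `B′(λ,t) = Σ_{k≥1} b′_k(λ,t)`. -/
noncomputable def B'fun (a b : ℂ) (n : ℕ) (lam : ℂ) (t : ℝ) : ℂ := ∑' k : ℕ, bk' a b n (k + 1) lam t

end Mathieu

open Mathieu

/-!
Every partial sum `j` of an admissible sequence avoids the resonances `0` and `2n`, so on the given
region each resolvent factor is `O(1/n)`; with at most `2^k` sequences of length `k` this gives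
`|a_k| ≤ Q (Q/12n)^k` for `Q = max(|a|, |b|, 1)`, and the geometric tail `Σ_{k≥2} a_k` is `O(n⁻²)`.
The first term `a_1 = ab((λ-c₁)⁻¹ + (λ-c₋₁)⁻¹)` is only `O(1/n)` termwise, but the two resolvents
nearly cancel. Reflecting the sequences reduces `A′` to `A` with `a, b` swapped and `t ↦ -t`.
-/

lemma summable_norm_and_norm_tsum_le_of_geometric {E : Type*} [SeminormedAddCommGroup E]
    {f : ℕ → E} {C r : ℝ} (hC : 0 ≤ C) (hr0 : 0 ≤ r) (hr : r ≤ 1 / 2)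
    (hf : ∀ k, ‖f k‖ ≤ C * r ^ (k + 1)) :
    Summable (fun k => ‖f k‖) ∧ ‖∑' k, f k‖ ≤ ‖f 0‖ + 2 * C * r ^ 2 := by
  have hgeo := summable_geometric_of_lt_one hr0 (by linarith)
  have hsum : Summable (fun k => ‖f k‖) :=
    .of_nonneg_of_le (fun _ => norm_nonneg _) (fun k => (hf k).trans_eq (by ring))
      (hgeo.mul_left (C * r))
  have htail : ∑' k, ‖f (k + 1)‖ ≤ 2 * C * r ^ 2 :=
    calc ∑' k, ‖f (k + 1)‖ ≤ ∑' k, C * r ^ 2 * r ^ k :=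
          (hsum.comp_injective (add_left_injective 1)).tsum_le_tsum
            (fun k => (hf (k + 1)).trans_eq (by ring)) (hgeo.mul_left _)
      _ = C * r ^ 2 * (1 - r)⁻¹ := by rw [tsum_mul_left, tsum_geometric_of_lt_one hr0 (by linarith)]
      _ ≤ C * r ^ 2 * 2 := by
          gcongr
          rw [inv_le_comm₀ (by linarith) two_pos]
          linarith
      _ = 2 * C * r ^ 2 := by ring
  refine ⟨hsum, (norm_tsum_le_tsum_norm hsum).trans ?_⟩
  rw [hsum.tsum_eq_zero_add]
  linarith

namespace Mathieu

noncomputable def qbound (a b : ℂ) : ℝ := max (max ‖a‖ ‖b‖) 1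

lemma one_le_qbound (a b : ℂ) : 1 ≤ qbound a b := le_max_right _ _

lemma qbound_comm (a b : ℂ) : qbound a b = qbound b a := by
  rw [qbound, qbound, max_comm ‖a‖]

lemma norm_left_le_qbound (a b : ℂ) : ‖a‖ ≤ qbound a b :=
  (le_max_left _ _).trans (le_max_left _ _)

lemma norm_right_le_qbound (a b : ℂ) : ‖b‖ ≤ qbound a b :=
  (le_max_right _ _).trans (le_max_left _ _)

lemma norm_qc_le (a b : ℂ) (m : ℤ) : ‖qc a b m‖ ≤ qbound a b := by
  unfold qc
  split_ifs
  · exact norm_left_le_qbound a b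
  · exact norm_right_le_qbound a b
  · simpa using zero_le_one.trans (one_le_qbound a b)

lemma qc_neg (a b : ℂ) (m : ℤ) : qc a b (-m) = qc b a m := by
  unfold qc
  split_ifs <;> first | rfl | omega

lemma sgn_not (x : Bool) : sgn (!x) = -sgn x := by
  cases x <;> rfl

lemma psum_not {k : ℕ} (v : Fin k → Bool) (s : ℕ) :
    psum (fun i => !v i) s = -psum v s := by
  simp only [psum, sgn_not, Finset.sum_neg_distrib]

lemma coadmissible_iff_admissible_not {n k : ℕ} (v : Fin k → Bool) :
    Coadmissible n k v ↔ Admissible n k (fun i => !v i) := by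
  simp only [Coadmissible, Admissible, psum_not]
  refine forall_congr' fun s => and_congr ?_ ?_ <;> omega

lemma denom'_eq_denom_neg (n : ℕ) (lam : ℂ) (t : ℝ) (j : ℤ) :
    denom' n lam t j = denom n lam (-t) (-j) := by
  unfold denom denom'
  push_cast
  ring_nf

/-- Reflecting the sequence, `nₛ ↦ -nₛ`, makes coadmissible sequences admissible, turns `q_m` for
`(a, b)` into `q_{-m}` for `(b, a)`, and `denom'` at `t` into `denom` at `-t`. -/
lemma ak'_eq_ak_swap (a b : ℂ) (n k : ℕ) (lam : ℂ) (t : ℝ) :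
    ak' a b n k lam t = ak b a n k lam (-t) := by
  unfold ak ak'
  refine Finset.sum_nbij' (fun v i => !v i) (fun v i => !v i) ?_ ?_ (by simp) (by simp) ?_
  · simp [coadmissible_iff_admissible_not]
  · simp [coadmissible_iff_admissible_not]
  · simp [psum_not, sgn_not, qc_neg, denom'_eq_denom_neg]

lemma A'fun_eq_Afun_swap (a b : ℂ) (n : ℕ) (lam : ℂ) (t : ℝ) :
    A'fun a b n lam t = Afun b a n lam (-t) := by
  simp only [A'fun, Afun, ak'_eq_ak_swap]


lemma five_mul_abs_le_abs_two_pi_mul_add {m : ℤ} (hm : m ≠ 0) {t : ℝ} (ht : |t| ≤ 1) :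
    5 * |(m : ℝ)| ≤ |2 * Real.pi * m + t| := by
  have hm1 : (1 : ℝ) ≤ |(m : ℝ)| := by
    rw [← Int.cast_abs]; exact_mod_cast Int.one_le_abs hm
  have h2pi : |2 * Real.pi * m| = 2 * Real.pi * |(m : ℝ)| := by
    rw [abs_mul, abs_of_pos Real.two_pi_pos]
  have := abs_sub_abs_le_abs_sub (2 * Real.pi * m) (-t)
  rw [sub_neg_eq_add, abs_neg, h2pi] at this
  nlinarith [Real.pi_gt_three]

/-- `(2πn)² - (2π(n-j)+t)² = (2πj - t)(2π(2n-j) + t)`, and off the resonances `j = 0, 2n`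
this is at least `25·|j|·|2n-j| ≥ 25n` in absolute value. -/
lemma mul_le_norm_inv_denom {n : ℕ} {lam : ℂ}
    (hlam : ‖lam - (((2 * Real.pi * n) ^ 2 : ℝ) : ℂ)‖ ≤ n) {t : ℝ} (ht : |t| ≤ 1)
    {j : ℤ} (hj0 : j ≠ 0) (hj2 : j ≠ 2 * n) :
    24 * (n : ℝ) ≤ ‖(denom n lam t j)⁻¹‖ := by
  have hj2' : 2 * (n : ℤ) - j ≠ 0 := sub_ne_zero.mpr hj2.symm
  have hf1 : 5 * |(j : ℝ)| ≤ |2 * Real.pi * j - t| := by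
    simpa [sub_eq_add_neg] using five_mul_abs_le_abs_two_pi_mul_add hj0 (t := -t) (by rwa [abs_neg])
  have hf2 : 5 * |(2 * n - j : ℝ)| ≤ |2 * Real.pi * (2 * n - j) + t| := by
    simpa using five_mul_abs_le_abs_two_pi_mul_add hj2' ht
  have hja : (1 : ℝ) ≤ |(j : ℝ)| := by
    rw [← Int.cast_abs]; exact_mod_cast Int.one_le_abs hj0
  have hjb : (1 : ℝ) ≤ |(2 * n - j : ℝ)| := by
    have h := Int.one_le_abs hj2'
    rify at h
    simpa using h
  have hsum : 2 * (n : ℝ) ≤ |(j : ℝ)| + |(2 * n - j : ℝ)| := by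
    simpa [abs_of_nonneg] using abs_add_le (j : ℝ) (2 * n - j)
  have hgap : 25 * (n : ℝ) ≤ |(2 * Real.pi * n) ^ 2 - (2 * Real.pi * (n - j) + t) ^ 2| := by
    rw [show (2 * Real.pi * n) ^ 2 - (2 * Real.pi * (n - j) + t) ^ 2
        = (2 * Real.pi * j - t) * (2 * Real.pi * (2 * n - j) + t) by ring, abs_mul]
    nlinarith [abs_nonneg (2 * Real.pi * j - t)]
  have htri := norm_sub_le_norm_sub_add_norm_sub (((2 * Real.pi * n) ^ 2 : ℝ) : ℂ) lam
    (((2 * Real.pi * (n - j) + t) ^ 2 : ℝ) : ℂ)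
  rw [← Complex.ofReal_sub, Complex.norm_real, Real.norm_eq_abs, norm_sub_rev] at htri
  rw [denom, inv_inv]
  linarith

lemma norm_denom_le {n : ℕ} (hn : 1 ≤ n) {lam : ℂ}
    (hlam : ‖lam - (((2 * Real.pi * n) ^ 2 : ℝ) : ℂ)‖ ≤ n) {t : ℝ} (ht : |t| ≤ 1)
    {j : ℤ} (hj0 : j ≠ 0) (hj2 : j ≠ 2 * n) :
    ‖denom n lam t j‖ ≤ (24 * (n : ℝ))⁻¹ := by
  rw [← inv_inv (denom n lam t j), norm_inv]
  exact inv_anti₀ (by positivity) (mul_le_norm_inv_denom hlam ht hj0 hj2)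


lemma norm_ak_le (a b : ℂ) {n : ℕ} (hn : 1 ≤ n) {lam : ℂ}
    (hlam : ‖lam - (((2 * Real.pi * n) ^ 2 : ℝ) : ℂ)‖ ≤ n) {t : ℝ} (ht : |t| ≤ 1) (k : ℕ) :
    ‖ak a b n k lam t‖ ≤ qbound a b * (qbound a b / (12 * n)) ^ k := by
  set Q := qbound a b
  have hQ : 0 ≤ Q := zero_le_one.trans (one_le_qbound a b)
  have hterm : ∀ v ∈ Finset.univ.filter (Admissible n k),
      ‖qc a b (-(psum v k)) *
        ∏ i : Fin k, (qc a b (sgn (v i)) * denom n lam t (psum v ((i : ℕ) + 1)))‖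
        ≤ Q * (Q * (24 * (n : ℝ))⁻¹) ^ k := by
    intro v hv
    have hadm := (Finset.mem_filter.mp hv).2
    rw [norm_mul, norm_prod]
    refine mul_le_mul (norm_qc_le a b _) ?_ (by positivity) hQ
    calc ∏ i : Fin k, ‖qc a b (sgn (v i)) * denom n lam t (psum v ((i : ℕ) + 1))‖
        ≤ ∏ _i : Fin k, Q * (24 * (n : ℝ))⁻¹ := by
          refine Finset.prod_le_prod (fun _ _ => norm_nonneg _) fun i _ => ?_
          rw [norm_mul]
          exact mul_le_mul (norm_qc_le a b _) (norm_denom_le hn hlam ht (hadm i).1 (hadm i).2)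
            (norm_nonneg _) hQ
      _ = (Q * (24 * (n : ℝ))⁻¹) ^ k := by simp
  have hcard : ((Finset.univ.filter (Admissible n k)).card : ℝ) ≤ 2 ^ k := by
    have := Finset.card_filter_le (Finset.univ : Finset (Fin k → Bool)) (Admissible n k)
    simp only [Finset.card_univ, Fintype.card_fun, Fintype.card_bool, Fintype.card_fin] at this
    exact_mod_cast this
  calc ‖ak a b n k lam t‖
      ≤ (Finset.univ.filter (Admissible n k)).card * (Q * (Q * (24 * (n : ℝ))⁻¹) ^ k) :=
        (norm_sum_le _ _).trans <| by
          simpa using Finset.sum_le_card_nsmul _ _ _ hterm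
    _ ≤ 2 ^ k * (Q * (Q * (24 * (n : ℝ))⁻¹) ^ k) := by gcongr
    _ = Q * (Q / (12 * n)) ^ k := by
        rw [← mul_assoc, mul_comm _ Q, mul_assoc, ← mul_pow]
        congr 2
        field_simp
        ring


lemma psum_one (v : Fin 1 → Bool) : psum v 1 = sgn (v 0) := by
  simp [psum]

lemma admissible_one (n : ℕ) (v : Fin 1 → Bool) : Admissible n 1 v := by
  intro s
  rw [Fin.fin_one_eq_zero s, Fin.val_zero, zero_add, psum_one]
  unfold sgn
  split_ifs <;> omega

lemma ak_one (a b : ℂ) (n : ℕ) (lam : ℂ) (t : ℝ) :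
    ak a b n 1 lam t = a * b * (denom n lam t 1 + denom n lam t (-1)) := by
  rw [ak, Finset.filter_true_of_mem fun v _ => admissible_one n v,
    ← (Equiv.funUnique (Fin 1) Bool).symm.sum_comp, Fintype.sum_bool]
  simp [psum_one, sgn, qc]
  ring

lemma abs_two_mul_sq_sub_sq_sub_sq_le {n : ℕ} (hn : 1 ≤ n) {t : ℝ} (ht : |t| ≤ ((n : ℝ) ^ 2)⁻¹) :
    |2 * (2 * Real.pi * n) ^ 2 - (2 * Real.pi * (n - 1) + t) ^ 2
      - (2 * Real.pi * (n + 1) + t) ^ 2| ≤ 108 := by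
  have hn1 : (1 : ℝ) ≤ n := by exact_mod_cast hn
  have htn : |t * n| ≤ 1 := by
    rw [abs_mul, Nat.abs_cast]
    calc |t| * n ≤ ((n : ℝ) ^ 2)⁻¹ * n := by gcongr
      _ = (n : ℝ)⁻¹ := by field_simp
      _ ≤ 1 := inv_le_one_of_one_le₀ hn1
  have ht1 : |t| ≤ 1 := ht.trans (inv_le_one_of_one_le₀ (one_le_pow₀ hn1))
  rw [show 2 * (2 * Real.pi * n) ^ 2 - (2 * Real.pi * (n - 1) + t) ^ 2
      - (2 * Real.pi * (n + 1) + t) ^ 2 = -(8 * Real.pi * (t * n) + 2 * t ^ 2 + 8 * Real.pi ^ 2)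
      by ring, abs_neg]
  have hsq : t ^ 2 ≤ 1 := by nlinarith [sq_abs t, abs_nonneg t]
  have hpi := Real.pi_lt_d2
  calc |8 * Real.pi * (t * n) + 2 * t ^ 2 + 8 * Real.pi ^ 2|
      ≤ 8 * Real.pi * |t * n| + 2 * t ^ 2 + 8 * Real.pi ^ 2 := by
        refine (abs_add_le _ _).trans ?_
        rw [abs_of_nonneg (by positivity : (0 : ℝ) ≤ 8 * Real.pi ^ 2)]
        refine add_le_add_left ((abs_add_le _ _).trans ?_) _
        rw [abs_mul, abs_of_pos (by positivity : (0 : ℝ) < 8 * Real.pi),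
          abs_of_nonneg (by positivity : (0 : ℝ) ≤ 2 * t ^ 2)]
    _ ≤ 108 := by nlinarith [Real.pi_pos]

/-- `(λ-c₁)⁻¹ + (λ-c₂)⁻¹ = (2λ-c₁-c₂)/((λ-c₁)(λ-c₂))`,
and `2λ - c₁ - c₂` stays bounded because `c₁ + c₂ = 2(2πn)² + O(1)` when `t = O(n⁻²)`. -/
lemma norm_denom_one_add_denom_neg_one_le {n : ℕ} (hn : 1 ≤ n) {lam : ℂ} {δ : ℝ}
    (hlam : ‖lam - (((2 * Real.pi * n) ^ 2 : ℝ) : ℂ)‖ ≤ δ) (hδ : δ ≤ n)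
    {t : ℝ} (ht : |t| ≤ ((n : ℝ) ^ 2)⁻¹) :
    ‖denom n lam t 1 + denom n lam t (-1)‖ ≤ (2 * δ + 108) / (24 * n) ^ 2 := by
  have hn1 : (1 : ℝ) ≤ n := by exact_mod_cast hn
  have ht1 : |t| ≤ 1 := ht.trans (inv_le_one_of_one_le₀ (one_le_pow₀ hn1))
  have hx := mul_le_norm_inv_denom (hlam.trans hδ) ht1 (j := 1) one_ne_zero (by omega)
  have hy := mul_le_norm_inv_denom (hlam.trans hδ) ht1 (j := -1) (by omega) (by omega)
  set x := (denom n lam t 1)⁻¹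
  set y := (denom n lam t (-1))⁻¹
  have hsum : ‖x + y‖ ≤ 2 * δ + 108 := by
    have hxy : x + y = 2 * (lam - (((2 * Real.pi * n) ^ 2 : ℝ) : ℂ))
        + ((2 * (2 * Real.pi * n) ^ 2 - (2 * Real.pi * (n - 1) + t) ^ 2
          - (2 * Real.pi * (n + 1) + t) ^ 2 : ℝ) : ℂ) := by
      simp only [x, y, denom, inv_inv]
      push_cast
      ring
    rw [hxy]
    refine (norm_add_le _ _).trans (add_le_add ?_ ?_)
    · rw [norm_mul, Complex.norm_two]; linarith
    · rw [Complex.norm_real, Real.norm_eq_abs]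
      exact abs_two_mul_sq_sub_sq_sub_sq_le hn ht
  have hx0 : x ≠ 0 := norm_pos_iff.mp (by linarith)
  have hy0 : y ≠ 0 := norm_pos_iff.mp (by linarith)
  rw [← inv_inv (denom n lam t 1), ← inv_inv (denom n lam t (-1)), inv_add_inv hx0 hy0,
    norm_div, norm_mul, sq]
  have := (norm_nonneg _).trans hsum
  gcongr


lemma summable_norm_ak_and_norm_Afun_le (a b : ℂ) {M : ℝ} {n : ℕ} (hnM : M ≤ n)
    (hnQ : qbound a b ≤ n) {t : ℝ} (ht : |t| ≤ ((n : ℝ) ^ 2)⁻¹) {lam : ℂ}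
    (hlam : ‖lam - (((2 * Real.pi * n) ^ 2 : ℝ) : ℂ)‖ ≤ M / n) :
    Summable (fun k : ℕ => ‖ak a b n (k + 1) lam t‖) ∧
      ‖Afun a b n lam t‖ ≤ qbound a b ^ 3 * (M + 1) / (n : ℝ) ^ 2 := by
  set Q := qbound a b
  have hQ1 : 1 ≤ Q := one_le_qbound a b
  have hn1 : (1 : ℝ) ≤ n := hQ1.trans hnQ
  have hn : 1 ≤ n := by exact_mod_cast hn1
  have hM : 0 ≤ M := by
    simpa using (le_div_iff₀ (by positivity)).mp ((norm_nonneg _).trans hlam)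
  have hMn : M / n ≤ M := div_le_self hM hn1
  have hlam' : ‖lam - (((2 * Real.pi * n) ^ 2 : ℝ) : ℂ)‖ ≤ n := hlam.trans (hMn.trans hnM)
  have ht1 : |t| ≤ 1 := ht.trans (inv_le_one_of_one_le₀ (one_le_pow₀ hn1))
  have hr : Q / (12 * n) ≤ 1 / 2 := by
    rw [div_le_div_iff₀ (by positivity) two_pos]; linarith
  obtain ⟨hsum, hA⟩ := summable_norm_and_norm_tsum_le_of_geometric (by positivity)
    (by positivity) hr fun k => norm_ak_le a b hn hlam' ht1 (k + 1)
  have hab : ‖a‖ * ‖b‖ ≤ Q ^ 2 := by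
    rw [sq]
    exact mul_le_mul (norm_left_le_qbound a b) (norm_right_le_qbound a b) (norm_nonneg _)
      (by positivity)
  have hfirst : ‖ak a b n 1 lam t‖ ≤ Q ^ 2 * ((2 * M + 108) / (24 * n) ^ 2) := by
    rw [ak_one, norm_mul, norm_mul]
    refine mul_le_mul hab ?_ (norm_nonneg _) (by positivity)
    refine (norm_denom_one_add_denom_neg_one_le hn hlam (hMn.trans hnM) ht).trans ?_
    gcongr
  refine ⟨hsum, hA.trans ?_⟩
  calc ‖ak a b n (0 + 1) lam t‖ + 2 * Q * (Q / (12 * n)) ^ 2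
      ≤ Q ^ 2 * ((2 * M + 108) / (24 * n) ^ 2) + 2 * Q * (Q / (12 * n)) ^ 2 := by gcongr
    _ = (Q ^ 2 * (2 * M + 108) + 8 * Q ^ 3) / 576 / (n : ℝ) ^ 2 := by field_simp; ring
    _ ≤ Q ^ 3 * (M + 1) / (n : ℝ) ^ 2 := by
        gcongr
        nlinarith [pow_le_pow_right₀ hQ1 (show 2 ≤ 3 by norm_num), pow_pos (by linarith : 0 < Q) 2]

end Mathieu

/-- Formula (53): on `|λ - (2πn)²| ≤ M/n`, `t ∈ [0, n⁻²]`, the series `A(λ,t)` and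
`A′(λ,t)` converge absolutely and are `O(n⁻²)`. -/
theorem stmt5 (a b : ℂ) (M : ℝ) (hM : 0 < M) :
    ∃ K : ℝ, 0 < K ∧ ∃ N : ℕ, ∀ n : ℕ, N < n →
      ∀ t : ℝ, t ∈ Set.Icc (0 : ℝ) (((n : ℝ) ^ 2)⁻¹) →
      ∀ lam : ℂ, ‖lam - (((2 * Real.pi * (n : ℝ)) ^ 2 : ℝ) : ℂ)‖ ≤ M / n →
        Summable (fun k : ℕ => ‖ak a b n (k + 1) lam t‖) ∧
        Summable (fun k : ℕ => ‖ak' a b n (k + 1) lam t‖) ∧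
        ‖Afun a b n lam t‖ ≤ K / (n : ℝ) ^ 2 ∧
        ‖A'fun a b n lam t‖ ≤ K / (n : ℝ) ^ 2 := by
  refine ⟨qbound a b ^ 3 * (M + 1), by have := one_le_qbound a b; positivity,
    ⌈M⌉₊ + ⌈qbound a b⌉₊, fun n hn t ht lam hlam => ?_⟩
  have hnM : M ≤ n := (Nat.le_ceil M).trans (by exact_mod_cast (by omega : ⌈M⌉₊ ≤ n))
  have hnQ : qbound a b ≤ n :=
    (Nat.le_ceil _).trans (by exact_mod_cast (by omega : ⌈qbound a b⌉₊ ≤ n))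
  have htabs : |t| ≤ ((n : ℝ) ^ 2)⁻¹ := by rw [abs_of_nonneg ht.1]; exact ht.2
  obtain ⟨hsum, hA⟩ := summable_norm_ak_and_norm_Afun_le a b hnM hnQ htabs hlam
  obtain ⟨hsum', hA'⟩ := summable_norm_ak_and_norm_Afun_le b a hnM
    (qbound_comm a b ▸ hnQ) (t := -t) (by rwa [abs_neg]) hlam
  simp only [← ak'_eq_ak_swap, ← A'fun_eq_Afun_swap, qbound_comm b a] at hsum' hA'
  exact ⟨hsum, hsum', hA, hA'⟩
end
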